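/- Let A be a unital associative algebra over a field k and let r, s be nonzero scalars. The linear map R(a⊗b) = s·ab⊗1 + r·1⊗ab − s·a⊗b on A⊗A is invertible, with inverse R⁻¹(a⊗b) = (1/r)·ab⊗1 + (1/s)·1⊗ab − (1/s)·a⊗b. -/
import Mathlib

open TensorProduct LinearMap

/-- For a unital associative `k`-algebra `A` and nonzero scalars `r, s`,
the linear map `R(a⊗b) = s·ab⊗1 + r·1⊗ab − s·a⊗b` on `A ⊗ A` is invertible with inverse
`S(a⊗b) = (1/r)·ab⊗1 + (1/s)·1⊗ab − (1/s)·a⊗b`. -/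
theorem stmt0 (k A : Type*) [Field k] [Ring A] [Algebra k A]
    (r s : k) (hr : r ≠ 0) (hs : s ≠ 0)
    (R S : A ⊗[k] A →ₗ[k] A ⊗[k] A)
    (hR : ∀ a b : A, R (a ⊗ₜ[k] b) =
      s • ((a * b) ⊗ₜ[k] (1 : A)) + r • ((1 : A) ⊗ₜ[k] (a * b)) - s • (a ⊗ₜ[k] b))
    (hS : ∀ a b : A, S (a ⊗ₜ[k] b) =
      r⁻¹ • ((a * b) ⊗ₜ[k] (1 : A)) + s⁻¹ • ((1 : A) ⊗ₜ[k] (a * b)) - s⁻¹ • (a ⊗ₜ[k] b)) :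
    R ∘ₗ S = LinearMap.id ∧ S ∘ₗ R = LinearMap.id := by
  constructor <;> ext a b <;>
  · simp only [AlgebraTensorModule.curry_apply, curry_apply, coe_restrictScalars, coe_comp,
      Function.comp_apply, id_coe, id_eq, hR, hS, map_add, map_sub, map_smul, mul_one, one_mul,
      smul_sub, smul_add, smul_smul, inv_mul_cancel₀ hr, inv_mul_cancel₀ hs,
      mul_inv_cancel₀ hr, mul_inv_cancel₀ hs, one_smul]
    module
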